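/- For every T large enough, the function E₁(s;T) := Γ(1/(2s)) / (π T^{1/(2s)} (2s−1)) on (1/2, 1) attains a unique interior minimum at some point s_T, and s_T → 1/2 as T → +∞. -/

import Mathlib

open Real Set Filter Topology

/-- The efficiency functional `E₁(s;T) = Γ(1/(2s)) / (π T^(1/(2s)) (2s-1))`. -/
noncomputable def E1 (s T : ℝ) : ℝ :=
  Real.Gamma (1/(2*s)) / (π * T^(1/(2*s)) * (2*s-1))

namespace Stmt10Aux

/-- The log of `E1` after the substitution `u = 1/(2s)`. -/
noncomputable def G (T u : ℝ) : ℝ :=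
  Real.log (Real.Gamma (u+1)) - Real.log (1-u) - Real.log π - u * Real.log T

lemma G_strictConvex (T : ℝ) : StrictConvexOn ℝ (Ioo (1/2:ℝ) 1) (G T) := by
  refine ⟨convex_Ioo _ _, ?_⟩
  rintro x hx y hy hxy a b ha hb hab
  have hx1 : (0:ℝ) < x + 1 := by linarith [hx.1]
  have hy1 : (0:ℝ) < y + 1 := by linarith [hy.1]
  have h1x : (0:ℝ) < 1 - x := by linarith [hx.2]
  have h1y : (0:ℝ) < 1 - y := by linarith [hy.2]
  have h1 := Real.convexOn_log_Gamma.2 (mem_Ioi.mpr hx1) (mem_Ioi.mpr hy1) ha.le hb.le hab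
  have h2 := strictConcaveOn_log_Ioi.2 (mem_Ioi.mpr h1x) (mem_Ioi.mpr h1y)
    (fun h => hxy (by linarith)) ha hb hab
  simp only [smul_eq_mul, Function.comp_apply] at h1 h2 ⊢
  have e1 : a*x + b*y + 1 = a*(x+1) + b*(y+1) := by linear_combination -hab
  have e2 : 1 - (a*x + b*y) = a*(1-x) + b*(1-y) := by linear_combination -hab
  have e3 : (a*x + b*y) * Real.log T = a*(x*Real.log T) + b*(y*Real.log T) := by ring
  have e4 : Real.log π = a * Real.log π + b * Real.log π := by
    linear_combination (-Real.log π) * hab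
  unfold G
  rw [e1, e2]
  linarith [h1, h2, e3, e4]

lemma mem_inv {u : ℝ} (hu : u ∈ Ioo (1/2:ℝ) 1) : 1/(2*u) ∈ Ioo (1/2:ℝ) 1 := by
  obtain ⟨h1, h2⟩ := hu
  have h2u : (0:ℝ) < 2*u := by linarith
  constructor
  · rw [lt_div_iff₀ h2u]; linarith
  · rw [div_lt_one h2u]; linarith

lemma E1_eq {s T : ℝ} (hT : 0 < T) (hs : s ∈ Ioo (1/2:ℝ) 1) :
    E1 s T = Real.exp (G T (1/(2*s))) := by
  obtain ⟨hs1, hs2⟩ := hs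
  have hspos : (0:ℝ) < s := by linarith
  set u := 1/(2*s) with hu
  have huI : u ∈ Ioo (1/2:ℝ) 1 := mem_inv ⟨hs1, hs2⟩
  have hupos : (0:ℝ) < u := by linarith [huI.1]
  have hu1 : u < 1 := huI.2
  have hΓu : 0 < Real.Gamma u := Real.Gamma_pos_of_pos hupos
  have hΓ : 0 < Real.Gamma (u+1) := Real.Gamma_pos_of_pos (by linarith)
  have h2s1 : (0:ℝ) < 2*s - 1 := by linarith
  have hTu : (0:ℝ) < T ^ u := Real.rpow_pos_of_pos hT u
  have hE1pos : 0 < E1 s T := by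
    unfold E1
    rw [← hu]
    exact div_pos hΓu (by positivity)
  rw [← Real.exp_log hE1pos]
  congr 1
  unfold E1 G
  rw [← hu]
  have key : 2*s - 1 = (1-u)/u := by
    rw [hu]; field_simp
  rw [Real.log_div hΓu.ne' (by positivity), Real.log_mul (by positivity) h2s1.ne',
    Real.log_mul Real.pi_pos.ne' hTu.ne', Real.log_rpow hT,
    Real.Gamma_add_one hupos.ne', Real.log_mul hupos.ne' hΓu.ne', key,
    Real.log_div (by linarith : (1:ℝ)-u ≠ 0) hupos.ne']
  ring

/-- `u` is the strict global minimizer of `G T` on `Ioo (1/2) 1`. -/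
def IsMinPt (T u : ℝ) : Prop :=
  u ∈ Ioo (1/2:ℝ) 1 ∧ ∀ v ∈ Ioo (1/2:ℝ) 1, v ≠ u → G T u < G T v

lemma isMinPt_unique {T u u' : ℝ} (h : IsMinPt T u) (h' : IsMinPt T u') : u = u' := by
  by_contra hne
  exact absurd (h.2 u' h'.1 (Ne.symm hne)) (not_lt.mpr (h'.2 u h.1 hne).le)

lemma G_continuousOn (T : ℝ) : ContinuousOn (G T) (Ioo (1/2:ℝ) 1) := by
  intro u hu
  have h1 : (0:ℝ) < u + 1 := by linarith [hu.1]
  have h2 : (0:ℝ) < 1 - u := by linarith [hu.2]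
  have hcΓ : ContinuousAt (fun u : ℝ => Real.Gamma (u+1)) u := by
    have hd : ContinuousAt Real.Gamma (u+1) := by
      refine (Real.differentiableAt_Gamma ?_).continuousAt
      intro m
      have : (0:ℝ) ≤ m := Nat.cast_nonneg m
      intro hc; rw [hc] at h1; linarith
    exact ContinuousAt.comp (f := fun u : ℝ => u + 1) hd (by fun_prop)
  have hΓpos : 0 < Real.Gamma (u+1) := Real.Gamma_pos_of_pos h1
  have hA : ContinuousAt (fun u : ℝ => Real.log (Real.Gamma (u+1))) u :=
    ContinuousAt.comp (f := fun u : ℝ => Real.Gamma (u+1))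
      (Real.continuousAt_log hΓpos.ne') hcΓ
  have hB : ContinuousAt (fun u : ℝ => Real.log (1-u)) u :=
    ContinuousAt.comp (f := fun u : ℝ => 1 - u) (Real.continuousAt_log h2.ne') (by fun_prop)
  have : ContinuousAt (G T) u := by
    unfold G
    exact ((hA.sub hB).sub continuousAt_const).sub (continuousAt_id.mul continuousAt_const)
  exact this.continuousWithinAt

lemma G_tendsto (T : ℝ) : Tendsto (G T) (𝓝[<] (1:ℝ)) atTop := by
  have h1 : Tendsto (fun u : ℝ => 1 - u) (𝓝[<] (1:ℝ)) (𝓝[>] (0:ℝ)) := by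
    rw [tendsto_nhdsWithin_iff]
    constructor
    · have h : Tendsto (fun u : ℝ => 1 - u) (𝓝 1) (𝓝 ((1:ℝ) - 1)) :=
        (continuous_const.sub continuous_id).tendsto 1
      rw [sub_self] at h
      exact h.mono_left nhdsWithin_le_nhds
    · filter_upwards [self_mem_nhdsWithin] with u hu
      exact mem_Ioi.mpr (sub_pos.mpr hu)
  have h2 : Tendsto (fun u : ℝ => -Real.log (1-u)) (𝓝[<] (1:ℝ)) atTop :=
    tendsto_neg_atBot_atTop.comp (Real.tendsto_log_nhdsGT_zero.comp h1)
  have h3 : Tendsto (fun u : ℝ => Real.log (Real.Gamma (u+1)) - Real.log π - u * Real.log T)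
      (𝓝[<] (1:ℝ)) (𝓝 (Real.log (Real.Gamma (1+1)) - Real.log π - 1 * Real.log T)) := by
    have hcΓ : ContinuousAt (fun u : ℝ => Real.Gamma (u+1)) 1 := by
      have hd : ContinuousAt Real.Gamma (1+1) := by
        refine (Real.differentiableAt_Gamma ?_).continuousAt
        intro m
        have : (0:ℝ) ≤ m := Nat.cast_nonneg m
        intro hc; linarith
      exact ContinuousAt.comp (f := fun u : ℝ => u + 1) hd (by fun_prop)
    have hΓpos : 0 < Real.Gamma ((1:ℝ)+1) := Real.Gamma_pos_of_pos (by norm_num)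
    have hA : ContinuousAt (fun u : ℝ => Real.log (Real.Gamma (u+1))) 1 :=
      ContinuousAt.comp (f := fun u : ℝ => Real.Gamma (u+1))
        (Real.continuousAt_log hΓpos.ne') hcΓ
    have hfull : ContinuousAt
        (fun u : ℝ => Real.log (Real.Gamma (u+1)) - Real.log π - u * Real.log T) 1 :=
      (hA.sub continuousAt_const).sub (continuousAt_id.mul continuousAt_const)
    exact (hfull.continuousWithinAt).tendsto
  have := h3.add_atTop h2
  refine this.congr fun u => ?_
  unfold G; ring

lemma eventually_lt {a c : ℝ} (hac : a < c) : ∀ᶠ T in atTop, G T c < G T a := by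
  have hdiff : Tendsto (fun T => G T c - G T a) atTop atBot := by
    have heq : (fun T => G T c - G T a)
        = fun T => (Real.log (Real.Gamma (c+1)) - Real.log (1-c)
            - (Real.log (Real.Gamma (a+1)) - Real.log (1-a)))
          + -((c - a) * Real.log T) := by
      funext T; unfold G; ring
    rw [heq]
    apply tendsto_atBot_add_const_left
    exact tendsto_neg_atTop_atBot.comp
      (Real.tendsto_log_atTop.const_mul_atTop (sub_pos.mpr hac))
  filter_upwards [hdiff.eventually (eventually_lt_atBot 0)] with T hT
  linarith [hT]

lemma main (ε : ℝ) (hε1 : 0 < ε) (hε2 : ε < 1/2) :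
    ∀ᶠ T in atTop, ∃ u, IsMinPt T u ∧ 1 - ε < u := by
  set a := 1 - ε with hadef
  set c := 1 - ε/2 with hcdef
  have ha : a ∈ Ioo (1/2:ℝ) 1 := ⟨by rw [hadef]; linarith, by rw [hadef]; linarith⟩
  have hc : c ∈ Ioo (1/2:ℝ) 1 := ⟨by rw [hcdef]; linarith, by rw [hcdef]; linarith⟩
  have hac : a < c := by rw [hadef, hcdef]; linarith
  filter_upwards [eventually_lt hac] with T hTca
  -- find b near 1 with G T c < G T b
  obtain ⟨b, hbG, hbc, hb1⟩ : ∃ b, G T c < G T b ∧ c < b ∧ b < 1 := by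
    have h1 : ∀ᶠ u in 𝓝[<] (1:ℝ), G T c < G T u :=
      (G_tendsto T).eventually_gt_atTop (G T c)
    have hc2 : c < 1 := by rw [hcdef]; linarith
    have h2 : ∀ᶠ u in 𝓝[<] (1:ℝ), u ∈ Ioo c 1 :=
      Ioo_mem_nhdsLT_of_mem (⟨hc2, le_refl (1:ℝ)⟩ : (1:ℝ) ∈ Ioc c 1)
    obtain ⟨b, hb1, hb2⟩ := (h1.and h2).exists
    exact ⟨b, hb1, hb2.1, hb2.2⟩
  have hab : a < b := lt_trans hac hbc
  have hIcc : Icc a b ⊆ Ioo (1/2:ℝ) 1 :=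
    fun x hx => ⟨lt_of_lt_of_le ha.1 hx.1, lt_of_le_of_lt hx.2 hb1⟩
  obtain ⟨m, hmIcc, hmin⟩ := isCompact_Icc.exists_isMinOn (nonempty_Icc.mpr hab.le)
    ((G_continuousOn T).mono hIcc)
  have hcmem : c ∈ Icc a b := ⟨hac.le, hbc.le⟩
  have hmc : G T m ≤ G T c := hmin hcmem
  have hma : m ≠ a := by
    intro h; rw [h] at hmc; exact absurd hmc (not_le.mpr hTca)
  have hmb : m ≠ b := by
    intro h; rw [h] at hmc; linarith
  have hmab : m ∈ Ioo a b :=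
    ⟨lt_of_le_of_ne hmIcc.1 (Ne.symm hma), lt_of_le_of_ne hmIcc.2 hmb⟩
  have hmIoo : m ∈ Ioo (1/2:ℝ) 1 := hIcc hmIcc
  have sc := G_strictConvex T
  have hGma : G T m < G T a := lt_of_le_of_lt hmc hTca
  have hGmb : G T m < G T b := by linarith
  refine ⟨m, ⟨hmIoo, ?_⟩, hmab.1⟩
  intro v hv hvm
  by_cases hvI : v ∈ Icc a b
  · -- midpoint argument inside the compact interval
    have hvmem : v ∈ Ioo (1/2:ℝ) 1 := hv
    have h := sc.2 hmIoo hvmem (Ne.symm hvm) (show (0:ℝ) < 1/2 by norm_num)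
      (show (0:ℝ) < 1/2 by norm_num) (show (1/2:ℝ) + 1/2 = 1 by norm_num)
    have hmidmem : (1/2:ℝ) • m + (1/2:ℝ) • v ∈ Icc a b :=
      (convex_Icc a b) hmIcc hvI (by norm_num) (by norm_num) (by norm_num)
    have h2 := hmin hmidmem
    simp only [smul_eq_mul] at h h2
    have h3 : G T m ≤ G T (1/2 * m + 1/2 * v) := h2
    linarith
  · rcases not_and_or.mp (fun h : a ≤ v ∧ v ≤ b => hvI ⟨h.1, h.2⟩) with hva | hvb
    · -- v < a : a is strictly between v and m
      push_neg at hva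
      have hmv : v < m := lt_trans hva hmab.1
      set t := (m - a)/(m - v) with ht_def
      set s := (a - v)/(m - v) with hs_def
      have hmvpos : (0:ℝ) < m - v := by linarith
      have ht : 0 < t := div_pos (by linarith [hmab.1]) hmvpos
      have hs : 0 < s := div_pos (by linarith) hmvpos
      have hts : t + s = 1 := by rw [ht_def, hs_def]; field_simp; ring
      have hcomb : t * v + s * m = a := by
        rw [ht_def, hs_def]; field_simp; ring
      have h := sc.2 hv hmIoo hvm ht hs hts
      simp only [smul_eq_mul] at h
      rw [hcomb] at h
      by_contra hle
      push_neg at hle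
      have h5 : t * G T v ≤ t * G T m := mul_le_mul_of_nonneg_left hle ht.le
      have h6 : t * G T m + s * G T m = G T m := by linear_combination (G T m) * hts
      linarith
    · -- v > b : b is strictly between m and v
      push_neg at hvb
      have hmv : m < v := lt_trans hmab.2 hvb
      set t := (v - b)/(v - m) with ht_def
      set s := (b - m)/(v - m) with hs_def
      have hmvpos : (0:ℝ) < v - m := by linarith
      have ht : 0 < t := div_pos (by linarith) hmvpos
      have hs : 0 < s := div_pos (by linarith [hmab.2]) hmvpos
      have hts : t + s = 1 := by rw [ht_def, hs_def]; field_simp; ring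
      have hcomb : t * m + s * v = b := by
        rw [ht_def, hs_def]; field_simp; ring
      have h := sc.2 hmIoo hv (fun h => hvm h.symm) ht hs hts
      simp only [smul_eq_mul] at h
      rw [hcomb] at h
      by_contra hle
      push_neg at hle
      have h5 : s * G T v ≤ s * G T m := mul_le_mul_of_nonneg_left hle hs.le
      have h6 : t * G T m + s * G T m = G T m := by linear_combination (G T m) * hts
      linarith
  
open Classical in
noncomputable def uT (T : ℝ) : ℝ := if h : ∃ u, IsMinPt T u then h.choose else 3/4

lemma uT_spec {T : ℝ} (h : ∃ u, IsMinPt T u) : IsMinPt T (uT T) := by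
  classical
  rw [uT, dif_pos h]; exact h.choose_spec

lemma hex : ∀ᶠ T in atTop, ∃ u, IsMinPt T u := by
  filter_upwards [main (1/4) (by norm_num) (by norm_num)] with T hT
  obtain ⟨u, hu, _⟩ := hT
  exact ⟨u, hu⟩

lemma uT_tendsto : Tendsto uT atTop (𝓝 1) := by
  rw [Metric.tendsto_atTop]
  intro ε hε
  have hε' : (0:ℝ) < min ε (1/4) := lt_min hε (by norm_num)
  obtain ⟨N, hN⟩ := eventually_atTop.mp (main (min ε (1/4)) hε' (by
    calc min ε (1/4) ≤ 1/4 := min_le_right _ _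
    _ < 1/2 := by norm_num))
  refine ⟨N, fun T hT => ?_⟩
  obtain ⟨u, hu, hub⟩ := hN T hT
  have heq : uT T = u := isMinPt_unique (uT_spec ⟨u, hu⟩) hu
  rw [Real.dist_eq, heq, abs_lt]
  have h1 : u < 1 := hu.1.2
  have h2 : min ε (1/4) ≤ ε := min_le_left _ _
  constructor <;> [linarith; linarith]

end Stmt10Aux

open Stmt10Aux in
theorem stmt10 :
    ∃ T₀ > (0:ℝ), ∃ sfun : ℝ → ℝ,
      (∀ T ≥ T₀, sfun T ∈ Set.Ioo (1/2:ℝ) 1 ∧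
        ∀ s ∈ Set.Ioo (1/2:ℝ) 1, s ≠ sfun T → E1 (sfun T) T < E1 s T) ∧
      Filter.Tendsto sfun Filter.atTop (nhds (1/2)) := by
  obtain ⟨N, hN⟩ := eventually_atTop.mp hex
  refine ⟨max N 1, lt_of_lt_of_le zero_lt_one (le_max_right N 1),
    fun T => 1/(2 * uT T), ?_, ?_⟩
  · intro T hT
    have hT1 : (1:ℝ) ≤ T := le_trans (le_max_right N 1) hT
    have hTN : N ≤ T := le_trans (le_max_left N 1) hT
    have hT0 : (0:ℝ) < T := by linarith
    have hmin := uT_spec (hN T hTN)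
    obtain ⟨huI, hmin2⟩ := hmin
    have hsfunI : 1/(2 * uT T) ∈ Ioo (1/2:ℝ) 1 := mem_inv huI
    refine ⟨hsfunI, fun s hs hne => ?_⟩
    have hupos : (0:ℝ) < uT T := by linarith [huI.1]
    have hspos : (0:ℝ) < s := by linarith [hs.1]
    rw [E1_eq hT0 hsfunI, E1_eq hT0 hs]
    apply Real.exp_lt_exp.mpr
    have hinv : 1/(2 * (1/(2 * uT T))) = uT T := by field_simp
    rw [hinv]
    apply hmin2
    · exact mem_inv hs
    · intro h
      apply hne
      show s = 1/(2 * uT T)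
      rw [← h]
      field_simp
  · have h1 : Tendsto (fun T => 1/(2 * uT T)) atTop (𝓝 (1/(2*1))) := by
      apply Filter.Tendsto.div tendsto_const_nhds (tendsto_const_nhds.mul uT_tendsto)
      norm_num
    simpa using h1
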